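/- Let b : S → {0,1}^K satisfy, for each s ∈ S, b(s)_a · b(s)_{a'} = 0 whenever a ≠ a' and b(s)_a² = b(s)_a (i.e., b(s) is an indicator of at most one action). Let Y, P : Ω → ℝ^C and V : Ω → S be random variables with all expectations finite, let γ_a = E[(Y − P)·b(V)_a] / E[b(V)_a] (assuming E[b(V)_a] > 0 for all a), and set P' = P + ∑_a γ_a b(V)_a. Then E[‖Y − P‖²] − E[‖Y − P'‖²] = ∑_a ‖γ_a‖² E[b(V)_a]. -/

import Mathlib

open MeasureTheory

/-! On each cell `a` the correction `γ a` is the mean of the residual `Y - P`, so the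
expansion `‖x‖² - ‖x - γ‖² = 2⟪x, γ⟫ - ‖γ‖²` integrates over the cell to `‖γ a‖² E[b_a]`;
since the cells are disjoint, `P'` corrects `P` on each cell separately and the
contributions add up. -/

section InnerProduct

variable {E : Type*} [NormedAddCommGroup E] [InnerProductSpace ℝ E] {ι : Type*}

theorem norm_sum_smul_sq_of_disjoint_indicator [DecidableEq ι] (s : Finset ι) (c : ι → ℝ)
    (hc01 : ∀ a, c a = 0 ∨ c a = 1) (hdisj : ∀ a a', a ≠ a' → c a * c a' = 0) (y : ι → E) :
    ‖∑ a ∈ s, c a • y a‖ ^ 2 = ∑ a ∈ s, c a * ‖y a‖ ^ 2 := by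
  have hmul : ∀ a a', c a * c a' = if a = a' then c a else 0 := by
    intro a a'
    split_ifs with h
    · subst h; rcases hc01 a with h | h <;> simp [h]
    · exact hdisj a a' h
  rw [← real_inner_self_eq_norm_sq, sum_inner]
  refine Finset.sum_congr rfl fun a ha => ?_
  simp_rw [inner_sum, real_inner_smul_left, real_inner_smul_right, ← mul_assoc, hmul,
    ite_mul, zero_mul, Finset.sum_ite_eq, if_pos ha, real_inner_self_eq_norm_sq]

theorem norm_sq_sub_norm_sub_sum_smul_sq [Fintype ι] (c : ι → ℝ)
    (hc01 : ∀ a, c a = 0 ∨ c a = 1) (hdisj : ∀ a a', a ≠ a' → c a * c a' = 0)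
    (x : E) (y : ι → E) :
    ‖x‖ ^ 2 - ‖x - ∑ a, c a • y a‖ ^ 2 =
      ∑ a, c a * (2 * inner ℝ x (y a) - ‖y a‖ ^ 2) := by
  classical
  rw [norm_sub_sq_real, norm_sum_smul_sq_of_disjoint_indicator _ c hc01 hdisj, inner_sum]
  simp_rw [real_inner_smul_right, mul_sub, Finset.sum_sub_distrib, Finset.mul_sum]
  ring_nf

end InnerProduct

section Integral

variable {Ω E : Type*} [MeasurableSpace Ω] [NormedAddCommGroup E] [InnerProductSpace ℝ E]
  {μ : Measure Ω} {c : Ω → ℝ} {X : Ω → E}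

theorem integrable_mul_inner_of_integrable_smul (hcX : Integrable (fun ω => c ω • X ω) μ)
    (g : E) : Integrable (fun ω => c ω * inner ℝ (X ω) g) μ := by
  simpa only [innerSL_apply_apply, real_inner_smul_right, real_inner_comm g] using
    (innerSL ℝ g).integrable_comp hcX

theorem integral_mul_two_inner_sub_norm_sq_of_integral_smul_eq [CompleteSpace E] {g : E}
    (hc : Integrable c μ) (hcX : Integrable (fun ω => c ω • X ω) μ)
    (hmean : ∫ ω, c ω • X ω ∂μ = (∫ ω, c ω ∂μ) • g) :
    ∫ ω, c ω * (2 * inner ℝ (X ω) g - ‖g‖ ^ 2) ∂μ = ‖g‖ ^ 2 * ∫ ω, c ω ∂μ := by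
  have hinner : ∫ ω, c ω * inner ℝ (X ω) g ∂μ = (∫ ω, c ω ∂μ) * ‖g‖ ^ 2 := by
    simp_rw [← real_inner_smul_left, real_inner_comm g]
    rw [integral_inner hcX, hmean, real_inner_smul_right, real_inner_self_eq_norm_sq]
  simp_rw [mul_sub, mul_left_comm (c _) 2]
  rw [integral_sub ((integrable_mul_inner_of_integrable_smul hcX g).const_mul 2)
    (hc.mul_const _), integral_const_mul, integral_mul_const, hinner]
  ring

end Integral

theorem stmt18_general {Ω S : Type*} [MeasurableSpace Ω] (μ : Measure Ω)
    {C K : ℕ}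
    (b : S → Fin K → ℝ)
    (hb01 : ∀ s a, b s a = 0 ∨ b s a = 1)
    (hdisj : ∀ s, ∀ a a' : Fin K, a ≠ a' → b s a * b s a' = 0)
    (Y P : Ω → EuclideanSpace ℝ (Fin C)) (V : Ω → S)
    (hInt1 : Integrable (fun ω => ‖Y ω - P ω‖ ^ 2) μ)
    (hIntb : ∀ a, Integrable (fun ω => b (V ω) a) μ)
    (hIntYP : ∀ a, Integrable (fun ω => b (V ω) a • (Y ω - P ω)) μ)
    (hpos : ∀ a, 0 < ∫ ω, b (V ω) a ∂μ)
    (γ : Fin K → EuclideanSpace ℝ (Fin C))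
    (hγ : γ = fun a => (∫ ω, b (V ω) a ∂μ)⁻¹ • ∫ ω, b (V ω) a • (Y ω - P ω) ∂μ)
    (P' : Ω → EuclideanSpace ℝ (Fin C))
    (hP' : P' = fun ω => P ω + ∑ a, b (V ω) a • γ a)
    (hInt2 : Integrable (fun ω => ‖Y ω - P' ω‖ ^ 2) μ) :
    (∫ ω, ‖Y ω - P ω‖ ^ 2 ∂μ) - ∫ ω, ‖Y ω - P' ω‖ ^ 2 ∂μ =
      ∑ a, ‖γ a‖ ^ 2 * ∫ ω, b (V ω) a ∂μ := by
  have hmean : ∀ a, ∫ ω, b (V ω) a • (Y ω - P ω) ∂μ = (∫ ω, b (V ω) a ∂μ) • γ a := by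
    intro a
    rw [hγ, smul_smul, mul_inv_cancel₀ (hpos a).ne', one_smul]
  have hpoint : ∀ ω, ‖Y ω - P ω‖ ^ 2 - ‖Y ω - P' ω‖ ^ 2 =
      ∑ a, b (V ω) a * (2 * inner ℝ (Y ω - P ω) (γ a) - ‖γ a‖ ^ 2) := by
    intro ω
    rw [← norm_sq_sub_norm_sub_sum_smul_sq _ (hb01 (V ω)) (hdisj (V ω)), hP',
      sub_add_eq_sub_sub]
  have hterm : ∀ a, Integrable
      (fun ω => b (V ω) a * (2 * inner ℝ (Y ω - P ω) (γ a) - ‖γ a‖ ^ 2)) μ := by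
    intro a
    simpa only [mul_sub, mul_left_comm _ (2 : ℝ), Pi.sub_def] using
      ((integrable_mul_inner_of_integrable_smul (hIntYP a) (γ a)).const_mul 2).sub
        ((hIntb a).mul_const _)
  rw [← integral_sub hInt1 hInt2, funext hpoint, integral_finsetSum _ fun a _ => hterm a]
  exact Finset.sum_congr rfl fun a _ =>
    integral_mul_two_inner_sub_norm_sq_of_integral_smul_eq (hIntb a) (hIntYP a) (hmean a)

theorem stmt18 {Ω S : Type*} [MeasurableSpace Ω] (μ : Measure Ω)
    [IsProbabilityMeasure μ] {C K : ℕ}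
    (b : S → Fin K → ℝ)
    (hb01 : ∀ s a, b s a = 0 ∨ b s a = 1)
    (hdisj : ∀ s, ∀ a a' : Fin K, a ≠ a' → b s a * b s a' = 0)
    (Y P : Ω → EuclideanSpace ℝ (Fin C)) (V : Ω → S)
    (hInt1 : Integrable (fun ω => ‖Y ω - P ω‖ ^ 2) μ)
    (hIntb : ∀ a, Integrable (fun ω => b (V ω) a) μ)
    (hIntYP : ∀ a, Integrable (fun ω => b (V ω) a • (Y ω - P ω)) μ)
    (hpos : ∀ a, 0 < ∫ ω, b (V ω) a ∂μ)
    (γ : Fin K → EuclideanSpace ℝ (Fin C))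
    (hγ : γ = fun a => (∫ ω, b (V ω) a ∂μ)⁻¹ • ∫ ω, b (V ω) a • (Y ω - P ω) ∂μ)
    (P' : Ω → EuclideanSpace ℝ (Fin C))
    (hP' : P' = fun ω => P ω + ∑ a, b (V ω) a • γ a)
    (hInt2 : Integrable (fun ω => ‖Y ω - P' ω‖ ^ 2) μ) :
    (∫ ω, ‖Y ω - P ω‖ ^ 2 ∂μ) - ∫ ω, ‖Y ω - P' ω‖ ^ 2 ∂μ =
      ∑ a, ‖γ a‖ ^ 2 * ∫ ω, b (V ω) a ∂μ :=
  stmt18_general μ b hb01 hdisj Y P V hInt1 hIntb hIntYP hpos γ hγ P' hP' hInt2
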